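/- Let M_i and M_j be two discounted MDPs with the same state space, action space, and discount factor γ ∈ [0,1), with max_s |R_i(s) − R_j(s)| ≤ ε_R, max_{s,a} ‖P_i(s,a) − P_j(s,a)‖₁ ≤ ε_P, and rewards bounded by R_max. Let π*_{M_j} be an optimal policy for M_j. Then for every state s, V_{M_i}^*(s) − V_{M_i}^{π*_{M_j}}(s) ≤ 2[ε_R/(1−γ) + γ ε_P R_max/(1−γ)²], i.e., the optimal policy of M_j is 2(ε_R/(1−γ) + γε_P R_max/(1−γ)²)-suboptimal when executed in M_i. -/

import Mathlib

/-! Compare both `V*_{M_i}` and the value of `π*_{M_j}` in `M_i` with `V*_{M_j}` in the sup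
norm. Each of the three is the fixed point of a Bellman backup (optimality or policy backup),
and the backups of `M_i` and `M_j` differ by `εR` in the reward and by at most `γ εP ‖w‖` in the
expected continuation value of `w`; moreover `‖V*_{M_j}‖ ≤ Rmax / (1 - γ)`. Since backups are
`γ`-Lipschitz, the distance `D` of each fixed point to `V*_{M_j}` satisfies
`D ≤ εR + γ D + γ εP Rmax / (1 - γ)`, i.e. `D ≤ εR/(1-γ) + γ εP Rmax/(1-γ)²`; the triangle
inequality through `V*_{M_j}` gives the factor 2. -/

open Finset

section SupNorm

variable {S : Type*} [Fintype S]

theorem abs_sum_mul_le_norm {p : S → ℝ} (hp : p ∈ stdSimplex ℝ S) (v : S → ℝ) :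
    |∑ s, p s * v s| ≤ ‖v‖ :=
  calc |∑ s, p s * v s| ≤ ∑ s, |p s * v s| := abs_sum_le_sum_abs _ _
    _ ≤ ∑ s, p s * ‖v‖ := sum_le_sum fun s _ => by
        rw [abs_mul, abs_of_nonneg (hp.1 s), ← Real.norm_eq_abs]
        exact mul_le_mul_of_nonneg_left (norm_le_pi_norm v s) (hp.1 s)
    _ = ‖v‖ := by rw [← sum_mul, hp.2, one_mul]

theorem abs_sum_sub_mul_le (p q w : S → ℝ) :
    |∑ s, (p s - q s) * w s| ≤ (∑ s, |p s - q s|) * ‖w‖ :=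
  calc |∑ s, (p s - q s) * w s| ≤ ∑ s, |(p s - q s) * w s| := abs_sum_le_sum_abs _ _
    _ ≤ ∑ s, |p s - q s| * ‖w‖ := sum_le_sum fun s _ => by
        rw [abs_mul, ← Real.norm_eq_abs (w s)]
        exact mul_le_mul_of_nonneg_left (norm_le_pi_norm w s) (abs_nonneg _)
    _ = (∑ s, |p s - q s|) * ‖w‖ := by rw [sum_mul]

theorem abs_bellman_sub_le {p q : S → ℝ} (hp : p ∈ stdSimplex ℝ S) {v w : S → ℝ}
    {r r' γ εR εP : ℝ} (hγ : 0 ≤ γ) (hr : |r - r'| ≤ εR) (hpq : ∑ s, |p s - q s| ≤ εP) :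
    |(r + γ * ∑ s, p s * v s) - (r' + γ * ∑ s, q s * w s)| ≤
      εR + γ * (‖v - w‖ + εP * ‖w‖) := by
  have hsplit : (r + γ * ∑ s, p s * v s) - (r' + γ * ∑ s, q s * w s) =
      (r - r') + γ * (∑ s, p s * (v - w) s + ∑ s, (p s - q s) * w s) := by
    simp only [Pi.sub_apply, mul_sub, sub_mul, sum_sub_distrib]
    ring
  have hv := abs_sum_mul_le_norm hp (v - w)
  have hw : |∑ s, (p s - q s) * w s| ≤ εP * ‖w‖ :=
    (abs_sum_sub_mul_le p q w).trans (mul_le_mul_of_nonneg_right hpq (norm_nonneg w))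
  rw [hsplit]
  calc _ ≤ |r - r'| + γ * (|∑ s, p s * (v - w) s| + |∑ s, (p s - q s) * w s|) := by
        grw [abs_add_le, abs_mul, abs_of_nonneg hγ, abs_add_le]
    _ ≤ εR + γ * (‖v - w‖ + εP * ‖w‖) := by gcongr

theorem norm_le_div_one_sub_of_abs_le [Nonempty S] {u : S → ℝ} {c γ : ℝ} (hγ : γ < 1)
    (h : ∀ s, |u s| ≤ c + γ * ‖u‖) : ‖u‖ ≤ c / (1 - γ) := by
  have hu : ‖u‖ ≤ c + γ * ‖u‖ := (pi_norm_le_iff_of_nonempty u).2 h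
  rw [le_div_iff₀ (by linarith)]
  linarith

theorem norm_le_of_bellman_eq [Nonempty S] {P : S → S → ℝ} (hP : ∀ s, P s ∈ stdSimplex ℝ S)
    {R V : S → ℝ} {γ Rmax : ℝ} (hγ0 : 0 ≤ γ) (hγ1 : γ < 1) (hR : ∀ s, |R s| ≤ Rmax)
    (hV : ∀ s, V s = R s + γ * ∑ s', P s s' * V s') : ‖V‖ ≤ Rmax / (1 - γ) :=
  norm_le_div_one_sub_of_abs_le hγ1 fun s => by
    rw [hV s]
    grw [abs_add_le, abs_mul, abs_of_nonneg hγ0, hR s, abs_sum_mul_le_norm (hP s) V]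

theorem norm_sub_le_of_abs_sub_le [Nonempty S] {V W : S → ℝ} {γ εR εP Rmax : ℝ}
    (hγ0 : 0 ≤ γ) (hγ1 : γ < 1) (hεP : 0 ≤ εP) (hW : ‖W‖ ≤ Rmax / (1 - γ))
    (h : ∀ s, |V s - W s| ≤ εR + γ * (‖V - W‖ + εP * ‖W‖)) :
    ‖V - W‖ ≤ εR / (1 - γ) + γ * εP * Rmax / (1 - γ) ^ 2 := by
  have h1γ : 0 < 1 - γ := by linarith
  calc ‖V - W‖ ≤ (εR + γ * εP * ‖W‖) / (1 - γ) :=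
        norm_le_div_one_sub_of_abs_le hγ1 fun s => (h s).trans_eq (by ring)
    _ ≤ (εR + γ * εP * (Rmax / (1 - γ))) / (1 - γ) := by gcongr
    _ = εR / (1 - γ) + γ * εP * Rmax / (1 - γ) ^ 2 := by field_simp

end SupNorm

theorem ciSup_sub_ciSup_le {A : Type*} [Finite A] [Nonempty A] {f g : A → ℝ} {c : ℝ}
    (h : ∀ a, f a - g a ≤ c) : (⨆ a, f a) - ⨆ a, g a ≤ c :=
  sub_le_iff_le_add.2 <| ciSup_le fun a => (sub_le_iff_le_add.1 (h a)).trans <|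
    add_le_add_right (le_ciSup (Set.finite_range g).bddAbove a) c

theorem abs_ciSup_sub_ciSup_le {A : Type*} [Finite A] [Nonempty A] {f g : A → ℝ} {c : ℝ}
    (h : ∀ a, |f a - g a| ≤ c) : |(⨆ a, f a) - ⨆ a, g a| ≤ c :=
  abs_sub_le_iff.2 ⟨ciSup_sub_ciSup_le fun a => (abs_sub_le_iff.1 (h a)).1,
    ciSup_sub_ciSup_le fun a => (abs_sub_le_iff.1 (h a)).2⟩

theorem optimal_policy_transfer_general
    {S A : Type*} [Fintype S] [Fintype A]
    (Pi Pj : S → A → S → ℝ) (Ri Rj : S → ℝ) (γ : ℝ)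
    (hγ0 : 0 ≤ γ) (hγ1 : γ < 1)
    (hPi : ∀ s a, (∀ s', 0 ≤ Pi s a s') ∧ ∑ s', Pi s a s' = 1)
    (hPj : ∀ s a, (∀ s', 0 ≤ Pj s a s') ∧ ∑ s', Pj s a s' = 1)
    (Rmax : ℝ) (hRj : ∀ s, |Rj s| ≤ Rmax)
    (εR εP : ℝ)
    (hεR : ∀ s, |Ri s - Rj s| ≤ εR)
    (hεP : ∀ s a, ∑ s', |Pi s a s' - Pj s a s'| ≤ εP)
    -- optimal value function of M_i (Bellman optimality equation)
    (Vistar : S → ℝ)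
    (hVistar : ∀ s, Vistar s = ⨆ a : A, (Ri s + γ * ∑ s', Pi s a s' * Vistar s'))
    -- optimal value function of M_j and an optimal policy πj attaining it
    (Vjstar : S → ℝ)
    (hVjstar : ∀ s, Vjstar s = ⨆ a : A, (Rj s + γ * ∑ s', Pj s a s' * Vjstar s'))
    (πj : S → A)
    (hπj : ∀ s, Vjstar s = Rj s + γ * ∑ s', Pj s (πj s) s' * Vjstar s')
    -- value of πj when executed in M_i
    (Viπ : S → ℝ)
    (hViπ : ∀ s, Viπ s = Ri s + γ * ∑ s', Pi s (πj s) s' * Viπ s') :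
    ∀ s, Vistar s - Viπ s ≤
      2 * (εR / (1 - γ) + γ * εP * Rmax / (1 - γ) ^ 2) := by
  intro s
  have : Nonempty S := ⟨s⟩
  have : Nonempty A := ⟨πj s⟩
  have hεP0 : 0 ≤ εP := (sum_nonneg fun _ _ => abs_nonneg _).trans (hεP s (πj s))
  have hVj := norm_le_of_bellman_eq (fun s => hPj s (πj s)) hγ0 hγ1 hRj hπj
  have hopt := norm_sub_le_of_abs_sub_le (V := Vistar) hγ0 hγ1 hεP0 hVj fun s => by
    rw [hVistar s, hVjstar s]
    exact abs_ciSup_sub_ciSup_le fun a => abs_bellman_sub_le (hPi s a) hγ0 (hεR s) (hεP s a)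
  have hpol := norm_sub_le_of_abs_sub_le (V := Viπ) hγ0 hγ1 hεP0 hVj fun s => by
    rw [hViπ s, hπj s]
    exact abs_bellman_sub_le (hPi s (πj s)) hγ0 (hεR s) (hεP s (πj s))
  have hopt_s := (norm_le_pi_norm (Vistar - Vjstar) s).trans hopt
  have hpol_s := (norm_le_pi_norm (Viπ - Vjstar) s).trans hpol
  rw [_root_.Pi.sub_apply, Real.norm_eq_abs] at hopt_s hpol_s
  linarith [le_abs_self (Vistar s - Vjstar s), neg_abs_le (Viπ s - Vjstar s)]

/-- Policy transfer. If `πj` is an optimal policy for MDP `M_j`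
(it attains the Bellman-optimal value `Vjstar` of `M_j`), `Vistar` is the optimal
value function of `M_i`, and `Viπ` is the value of `πj` executed in `M_i`, then
`πj` is `2(εR/(1-γ) + γ εP Rmax/(1-γ)²)`-suboptimal in `M_i`. -/
theorem optimal_policy_transfer
    {S A : Type*} [Fintype S] [Fintype A] [Nonempty S] [Nonempty A]
    (Pi Pj : S → A → S → ℝ) (Ri Rj : S → ℝ) (γ : ℝ)
    (hγ0 : 0 ≤ γ) (hγ1 : γ < 1)
    (hPi : ∀ s a, (∀ s', 0 ≤ Pi s a s') ∧ ∑ s', Pi s a s' = 1)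
    (hPj : ∀ s a, (∀ s', 0 ≤ Pj s a s') ∧ ∑ s', Pj s a s' = 1)
    (Rmax : ℝ) (hRi : ∀ s, |Ri s| ≤ Rmax) (hRj : ∀ s, |Rj s| ≤ Rmax)
    (εR εP : ℝ)
    (hεR : ∀ s, |Ri s - Rj s| ≤ εR)
    (hεP : ∀ s a, ∑ s', |Pi s a s' - Pj s a s'| ≤ εP)
    -- optimal value function of M_i (Bellman optimality equation)
    (Vistar : S → ℝ)
    (hVistar : ∀ s, Vistar s = ⨆ a : A, (Ri s + γ * ∑ s', Pi s a s' * Vistar s'))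
    -- optimal value function of M_j and an optimal policy πj attaining it
    (Vjstar : S → ℝ)
    (hVjstar : ∀ s, Vjstar s = ⨆ a : A, (Rj s + γ * ∑ s', Pj s a s' * Vjstar s'))
    (πj : S → A)
    (hπj : ∀ s, Vjstar s = Rj s + γ * ∑ s', Pj s (πj s) s' * Vjstar s')
    -- value of πj when executed in M_i
    (Viπ : S → ℝ)
    (hViπ : ∀ s, Viπ s = Ri s + γ * ∑ s', Pi s (πj s) s' * Viπ s') :
    ∀ s, Vistar s - Viπ s ≤
      2 * (εR / (1 - γ) + γ * εP * Rmax / (1 - γ) ^ 2) :=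
  optimal_policy_transfer_general Pi Pj Ri Rj γ hγ0 hγ1 hPi hPj Rmax hRj εR εP hεR hεP Vistar
    hVistar Vjstar hVjstar πj hπj Viπ hViπ
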